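/- arXiv:2203.11796 — 6 statements merged into one kernel-verified Lean document; each statement's English description precedes it below -/
import Mathlib

section
/- Let ω : [0,1) → [0,∞) be integrable (viewed as a radial weight) and set ω̂(r) = ∫_r^1 ω(s) ds. Suppose there exists β > 0 and a constant C > 0 such that ω̂(r)/(1-r)^β ≤ C ω̂(t)/(1-t)^β for all 0 ≤ r ≤ t < 1. Then for every ε > 0 there exists a constant C' > 0 such that ∫₀^t ω(s)/(1-s)^{β+ε} ds ≤ C' ω̂(t)/(1-t)^{β+ε} for all 0 ≤ t < 1. -/
open MeasureTheory Set Interval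

/-!
Write `γ = β + ε` and `ω̂ t = ∫ s in t..1, ω s`. Integrating by parts against the absolutely
continuous primitive of `ω`,
`∫₀ᵗ ω s (1 - s)^(-γ) ds = ∫₀ᵗ ω + γ ∫₀ᵗ (1 - u)^(-γ-1) (∫ᵤᵗ ω) du`.
The hypothesis at the pair `(u, t)` gives `∫ᵤᵗ ω ≤ ω̂ u ≤ D (1 - u)^β` with
`D = C ω̂ t / (1 - t)^β`, so the second term is at most `D γ ∫₀ᵗ (1 - u)^(-ε-1) du ≤
(D γ / ε) (1 - t)^(-ε)`: the gain `ε` in the exponent is what makes this integral a power of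
`1 - t` again, and `D (1 - t)^(-ε) = C ω̂ t / (1 - t)^γ`.
-/

lemma Set.uIcc_subset_Iio {α : Type*} [LinearOrder α] {a b c : α} (ha : a < c) (hb : b < c) :
    [[a, b]] ⊆ Iio c :=
  fun _ hx => hx.2.trans_lt (max_lt ha hb)

theorem IntervalIntegrable.integral_mul_eq_add_integral_deriv_mul_integral
    {f ψ : ℝ → ℝ} {a b : ℝ} (hf : IntervalIntegrable f volume a b)
    (hψ : AbsolutelyContinuousOnInterval ψ a b) :
    ∫ x in a..b, f x * ψ x =
      ψ a * (∫ x in a..b, f x) + ∫ x in a..b, deriv ψ x * ∫ y in x..b, f y := by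
  set F : ℝ → ℝ := fun x => ∫ y in b..x, f y
  have hF : AbsolutelyContinuousOnInterval F a b :=
    hf.absolutelyContinuousOnInterval_intervalIntegral right_mem_uIcc
  have hderiv : ∀ᵐ x, x ∈ Ι a b → f x * ψ x = ψ x * deriv F x := by
    filter_upwards [hf.ae_hasDerivAt_integral] with x hx hxab
    rw [(hx (uIoc_subset_uIcc hxab) b right_mem_uIcc).deriv, mul_comm]
  have hFx : ∀ x, F x = -∫ y in x..b, f y := fun x => intervalIntegral.integral_symm _ _
  rw [intervalIntegral.integral_congr_ae hderiv, hψ.integral_mul_deriv_eq_deriv_mul hF]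
  simp only [hFx, intervalIntegral.integral_same, neg_zero, mul_zero, mul_neg, zero_add,
    intervalIntegral.integral_neg, sub_neg_eq_add]

lemma continuousOn_one_sub_rpow (p : ℝ) : ContinuousOn (fun x : ℝ => (1 - x) ^ p) (Iio 1) :=
  continuousOn_of_forall_continuousAt fun _ hx =>
    (continuousAt_const.sub continuousAt_id).rpow_const (Or.inl (sub_pos.2 hx).ne')

lemma hasDerivAt_one_sub_rpow_neg (c : ℝ) {x : ℝ} (hx : x < 1) :
    HasDerivAt (fun y => (1 - y) ^ (-c)) (c * (1 - x) ^ (-c - 1)) x := by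
  have := ((hasDerivAt_id x).const_sub 1).rpow_const (p := -c) (Or.inl (sub_pos.2 hx).ne')
  convert this using 1 <;> simp

lemma absolutelyContinuousOnInterval_one_sub_rpow (p : ℝ) {a b : ℝ} (ha : a < 1) (hb : b < 1) :
    AbsolutelyContinuousOnInterval (fun x : ℝ => (1 - x) ^ p) a b :=
  ContDiffOn.absolutelyContinuousOnInterval <|
    (contDiffOn_const.sub contDiffOn_id).rpow_const_of_ne fun _ hx =>
      (sub_pos.2 (uIcc_subset_Iio ha hb hx)).ne'

lemma integral_mul_one_sub_rpow_neg_sub_one (c : ℝ) {a b : ℝ} (ha : a < 1) (hb : b < 1) :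
    ∫ x in a..b, c * (1 - x) ^ (-c - 1) = (1 - b) ^ (-c) - (1 - a) ^ (-c) := by
  have hsub : [[a, b]] ⊆ Iio 1 := uIcc_subset_Iio ha hb
  exact intervalIntegral.integral_eq_sub_of_hasDerivAt
    (fun x hx => hasDerivAt_one_sub_rpow_neg c (hsub hx))
    (((continuousOn_one_sub_rpow _).mono hsub).const_smul c).intervalIntegrable

lemma integral_div_one_sub_rpow_eq {ω : ℝ → ℝ} {a b : ℝ} (γ : ℝ) (ha : a < 1) (hb : b < 1)
    (hω : IntervalIntegrable ω volume a b) :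
    ∫ s in a..b, ω s / (1 - s) ^ γ =
      (1 - a) ^ (-γ) * (∫ s in a..b, ω s) +
        ∫ u in a..b, γ * (1 - u) ^ (-γ - 1) * ∫ s in u..b, ω s := by
  have hsub : [[a, b]] ⊆ Iio 1 := uIcc_subset_Iio ha hb
  calc ∫ s in a..b, ω s / (1 - s) ^ γ = ∫ s in a..b, ω s * (1 - s) ^ (-γ) :=
        intervalIntegral.integral_congr fun s hs => by
          rw [Real.rpow_neg (sub_pos.2 (hsub hs)).le, div_eq_mul_inv]
    _ = _ := hω.integral_mul_eq_add_integral_deriv_mul_integral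
        (absolutelyContinuousOnInterval_one_sub_rpow (-γ) ha hb)
    _ = _ := by
        congr 1
        exact intervalIntegral.integral_congr fun u hu => by
          simp only [(hasDerivAt_one_sub_rpow_neg γ (hsub hu)).deriv]

lemma integral_one_sub_rpow_mul_integral_le {ω : ℝ → ℝ} {β ε D t : ℝ} (hγ : 0 ≤ β + ε)
    (hε : ε ≠ 0) (ht0 : 0 ≤ t) (ht1 : t < 1) (hω : IntegrableOn ω [[0, t]])
    (hle : ∀ u ∈ Icc 0 t, ∫ s in u..t, ω s ≤ D * (1 - u) ^ β) :
    ∫ u in 0..t, (β + ε) * (1 - u) ^ (-(β + ε) - 1) * ∫ s in u..t, ω s ≤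
      D * (β + ε) / ε * ((1 - t) ^ (-ε) - 1) := by
  set γ := β + ε
  have hsub : [[(0 : ℝ), t]] ⊆ Iio 1 := uIcc_subset_Iio one_pos ht1
  have hbound : ∀ u ∈ Icc 0 t, γ * (1 - u) ^ (-γ - 1) * ∫ s in u..t, ω s ≤
      D * γ / ε * (ε * (1 - u) ^ (-ε - 1)) := by
    intro u hu
    have h1u : 0 < 1 - u := sub_pos.2 (hsub (Icc_subset_uIcc hu))
    calc γ * (1 - u) ^ (-γ - 1) * ∫ s in u..t, ω s
        ≤ γ * (1 - u) ^ (-γ - 1) * (D * (1 - u) ^ β) := by gcongr; exact hle u hu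
      _ = D * γ / ε * (ε * (1 - u) ^ (-ε - 1)) := by
        rw [show -ε - 1 = (-γ - 1) + β by ring, Real.rpow_add h1u]
        field_simp
  have hpow (c p : ℝ) : IntervalIntegrable (fun u => c * (1 - u) ^ p) volume 0 t :=
    (((continuousOn_one_sub_rpow p).mono hsub).const_smul c).intervalIntegrable
  calc ∫ u in 0..t, γ * (1 - u) ^ (-γ - 1) * ∫ s in u..t, ω s
      ≤ ∫ u in 0..t, D * γ / ε * (ε * (1 - u) ^ (-ε - 1)) :=
        intervalIntegral.integral_mono_on ht0
          ((hpow γ _).mul_continuousOn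
            (intervalIntegral.continuousOn_primitive_interval_left hω))
          ((hpow ε _).const_mul _) hbound
    _ = D * γ / ε * ((1 - t) ^ (-ε) - 1) := by
        rw [intervalIntegral.integral_const_mul,
          integral_mul_one_sub_rpow_neg_sub_one ε one_pos ht1, sub_zero, Real.one_rpow]

lemma integral_div_one_sub_rpow_le_of_tail_le {ω : ℝ → ℝ} (hω : ∀ s, 0 ≤ ω s)
    (hint : IntegrableOn ω (Icc 0 1)) {β ε D t : ℝ} (hγ : 0 ≤ β + ε) (hε : 0 < ε)
    (ht0 : 0 ≤ t) (ht1 : t < 1)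
    (htail : ∀ u ∈ Icc 0 t, ∫ s in u..1, ω s ≤ D * (1 - u) ^ β) :
    ∫ s in 0..t, ω s / (1 - s) ^ (β + ε) ≤ D * (1 + (β + ε) / ε) * (1 - t) ^ (-ε) := by
  set γ := β + ε
  have hωI : ∀ a ∈ Icc (0 : ℝ) 1, ∀ b ∈ Icc (0 : ℝ) 1, IntegrableOn ω [[a, b]] :=
    fun a ha b hb => hint.mono_set (uIcc_subset_Icc ha hb)
  have hle : ∀ u ∈ Icc 0 t, ∫ s in u..t, ω s ≤ D * (1 - u) ^ β := fun u hu => by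
    have hu1 : IntegrableOn ω [[u, 1]] := hωI u ⟨hu.1, hu.2.trans ht1.le⟩ 1 ⟨zero_le_one, le_rfl⟩
    exact (intervalIntegral.integral_mono_interval le_rfl hu.2 ht1.le (ae_of_all _ fun s => hω s)
      hu1.intervalIntegrable).trans (htail u hu)
  have hD : 0 ≤ D := by
    simpa using (intervalIntegral.integral_nonneg zero_le_one fun s _ => hω s).trans
      (htail 0 ⟨le_rfl, ht0⟩)
  have hmass : ∫ s in 0..t, ω s ≤ D := by simpa using hle 0 ⟨le_rfl, ht0⟩
  have hω0t := hωI 0 ⟨le_rfl, zero_le_one⟩ t ⟨ht0, ht1.le⟩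
  have hone : 1 ≤ (1 - t) ^ (-ε) :=
    Real.one_le_rpow_of_pos_of_le_one_of_nonpos (by linarith) (by linarith) (by linarith)
  have hcoef : 0 ≤ D * γ / ε := by positivity
  calc ∫ s in 0..t, ω s / (1 - s) ^ γ
      = (∫ s in 0..t, ω s) + ∫ u in 0..t, γ * (1 - u) ^ (-γ - 1) * ∫ s in u..t, ω s := by
        rw [integral_div_one_sub_rpow_eq γ one_pos ht1 hω0t.intervalIntegrable, sub_zero,
          Real.one_rpow, one_mul]
    _ ≤ D + D * γ / ε * ((1 - t) ^ (-ε) - 1) :=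
        add_le_add hmass (integral_one_sub_rpow_mul_integral_le hγ hε.ne' ht0 ht1 hω0t hle)
    _ = D * (1 + γ / ε) * (1 - t) ^ (-ε) - D * ((1 - t) ^ (-ε) - 1) - D * γ / ε := by ring
    _ ≤ D * (1 + γ / ε) * (1 - t) ^ (-ε) := by
        linarith [mul_nonneg hD (sub_nonneg.2 hone)]

theorem doubling_tail_to_integral (ω : ℝ → ℝ) (hω : ∀ s, 0 ≤ ω s)
    (hint : IntegrableOn ω (Set.Ico (0:ℝ) 1))
    (β C : ℝ) (hβ : 0 < β) (hC : 0 < C)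
    (h : ∀ r t : ℝ, 0 ≤ r → r ≤ t → t < 1 →
      (∫ s in r..1, ω s) / (1 - r) ^ β ≤ C * ((∫ s in t..1, ω s) / (1 - t) ^ β)) :
    ∀ ε : ℝ, 0 < ε → ∃ C' : ℝ, 0 < C' ∧ ∀ t : ℝ, 0 ≤ t → t < 1 →
      (∫ s in (0:ℝ)..t, ω s / (1 - s) ^ (β + ε)) ≤
        C' * ((∫ s in t..1, ω s) / (1 - t) ^ (β + ε)) := by
  intro ε hε
  refine ⟨C * (1 + (β + ε) / ε), by positivity, fun t ht0 ht1 => ?_⟩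
  have h1t : 0 < 1 - t := sub_pos.2 ht1
  have htail : ∀ u ∈ Icc 0 t,
      ∫ s in u..1, ω s ≤ C * ((∫ s in t..1, ω s) / (1 - t) ^ β) * (1 - u) ^ β := fun u hu =>
    (div_le_iff₀ (Real.rpow_pos_of_pos (by linarith [hu.2]) β)).1 (h u t hu.1 hu.2 ht1)
  calc ∫ s in 0..t, ω s / (1 - s) ^ (β + ε)
      ≤ C * ((∫ s in t..1, ω s) / (1 - t) ^ β) * (1 + (β + ε) / ε) * (1 - t) ^ (-ε) :=
        integral_div_one_sub_rpow_le_of_tail_le hω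
          (by rwa [integrableOn_Icc_iff_integrableOn_Ico]) (by positivity) hε ht0 ht1 htail
    _ = C * (1 + (β + ε) / ε) * ((∫ s in t..1, ω s) / (1 - t) ^ (β + ε)) := by
        rw [Real.rpow_add h1t, Real.rpow_neg h1t.le]
        ring
end

section
/- Let ω : [0,1) → [0,∞) be integrable with ω̂(r) = ∫_r^1 ω(s) ds. Suppose there exists λ > 0 and C > 0 such that ∫_𝔻 ω(|z|) dA(z)/|1 - ξ̄ z|^{λ+1} ≤ C ω̂(|ξ|)/(1-|ξ|)^λ for all ξ ∈ 𝔻. Then there exists C' > 0 such that ω̂(r)/(1-r)^λ ≤ C' ω̂(t)/(1-t)^λ for all 0 ≤ r ≤ t < 1. -/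
open MeasureTheory Set Real Complex

/-!
Test the kernel bound at `ξ = t` against the polar sector `r < |z| < 1, |arg z| < 1 - r`, on which
`|1 - t z| ≤ 3 (1 - r)`: this gives `∫_r^1 s ω(s) ds ≲ (1 - r)^λ ω̂(t) / (1 - t)^λ` for `r ≤ t`.
It remains to bound `ω̂(r)` by a fixed multiple of `∫_r^1 s ω(s) ds` for all `r ∈ [0, 1]`; this is
clear for `r` away from `0`, and near `0` it follows from the continuity of `ω̂`.
-/

theorem one_sub_le_norm_one_sub_ofReal_mul_polar {t s : ℝ} (ht : 0 ≤ t) (hs₀ : 0 ≤ s)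
    (hs : s ≤ 1) (θ : ℝ) : 1 - t ≤ ‖1 - t * (s * exp (θ * I))‖ := by
  have hnorm : ‖(t : ℂ) * (s * exp (θ * I))‖ ≤ t := by
    rw [norm_mul, norm_mul, norm_exp_ofReal_mul_I, norm_real, norm_real,
      Real.norm_of_nonneg ht, Real.norm_of_nonneg hs₀, mul_one]
    exact mul_le_of_le_one_right ht hs
  have := norm_sub_norm_le (1 : ℂ) (t * (s * exp (θ * I)))
  rw [norm_one] at this
  linarith

theorem norm_one_sub_ofReal_mul_exp_le {a : ℝ} (ha₀ : 0 ≤ a) (ha₁ : a ≤ 1) (θ : ℝ) :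
    ‖1 - a * exp (θ * I)‖ ≤ 1 - a + |θ| := by
  have hexp : ‖1 - exp (θ * I)‖ ≤ |θ| := by
    simpa [norm_sub_rev, mul_comm] using norm_exp_I_mul_ofReal_sub_one_le (x := θ)
  calc ‖1 - a * exp (θ * I)‖ = ‖((1 - a : ℝ) : ℂ) + a * (1 - exp (θ * I))‖ := by
        push_cast; ring_nf
    _ ≤ ‖((1 - a : ℝ) : ℂ)‖ + a * ‖1 - exp (θ * I)‖ := by
        simpa [abs_of_nonneg ha₀] using norm_add_le ((1 - a : ℝ) : ℂ) (a * (1 - exp (θ * I)))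
    _ ≤ 1 - a + 1 * |θ| := by
        rw [norm_real, Real.norm_of_nonneg (by linarith)]
        gcongr
    _ = 1 - a + |θ| := by ring

theorem norm_one_sub_ofReal_mul_polar_le {r t s θ : ℝ} (hr : 0 ≤ r) (hrs : r ≤ s) (hs : s ≤ 1)
    (hrt : r ≤ t) (ht : t ≤ 1) (hθ : |θ| ≤ 1 - r) :
    ‖1 - t * (s * exp (θ * I))‖ ≤ 3 * (1 - r) := by
  have := norm_one_sub_ofReal_mul_exp_le (a := t * s) (by nlinarith) (by nlinarith) θ
  rw [ofReal_mul, mul_assoc] at this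
  nlinarith

theorem integral_ball_eq_integral_polar {E : Type*} [NormedAddCommGroup E] [NormedSpace ℝ E]
    (f : ℂ → E) (R : ℝ) :
    ∫ z in Metric.ball (0 : ℂ) R, f z =
      ∫ p in Ioo 0 R ×ˢ Ioo (-π) π, p.1 • f (p.1 * exp (p.2 * I)) := by
  set g : ℝ × ℝ → ℂ := fun p => p.1 * exp (p.2 * I)
  have hg : Complex.polarCoord.symm = g := funext fun p => by simp [g, exp_mul_I]
  have hball : polarCoord.target ∩ g ⁻¹' Metric.ball 0 R = Ioo 0 R ×ˢ Ioo (-π) π := by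
    ext p
    rw [← hg]
    simp only [polarCoord_target, mem_inter_iff, mem_prod, mem_preimage, mem_ball_zero_iff,
      norm_polarCoord_symm, mem_Ioi, mem_Ioo]
    constructor
    · rintro ⟨⟨hp, hθ⟩, hR⟩
      exact ⟨⟨hp, by rwa [abs_of_pos hp] at hR⟩, hθ⟩
    · rintro ⟨⟨hp, hR⟩, hθ⟩
      exact ⟨⟨hp, hθ⟩, by rwa [abs_of_pos hp]⟩
  have hmeas : MeasurableSet (g ⁻¹' Metric.ball 0 R) :=
    Metric.isOpen_ball.measurableSet.preimage (by fun_prop)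
  rw [← integral_indicator Metric.isOpen_ball.measurableSet,
    ← Complex.integral_comp_polarCoord_symm, ← hball, ← setIntegral_indicator hmeas, hg]
  congr 1 with p
  by_cases hp : p ∈ g ⁻¹' Metric.ball 0 R
  · rw [indicator_of_mem hp, indicator_of_mem (s := Metric.ball 0 R) hp]
  · rw [indicator_of_notMem hp, indicator_of_notMem (s := Metric.ball 0 R) hp, smul_zero]

theorem setIntegral_prod_Ioo_fst (g : ℝ → ℝ) (s : Set ℝ) {a b : ℝ} (hab : a ≤ b) :
    ∫ p in s ×ˢ Ioo a b, g p.1 = (b - a) * ∫ x in s, g x := by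
  rw [Measure.volume_eq_prod, ← Measure.prod_restrict, integral_fun_fst,
    measureReal_restrict_apply_univ, Real.volume_real_Ioo_of_le hab, smul_eq_mul]

theorem integrableOn_polar_kernel {ω : ℝ → ℝ} (hint : IntegrableOn ω (Ioo 0 1)) {q t : ℝ}
    (hq : 0 ≤ q) (ht₀ : 0 ≤ t) (ht : t < 1) :
    IntegrableOn (fun p : ℝ × ℝ => p.1 * ω p.1 / ‖1 - t * (p.1 * exp (p.2 * I))‖ ^ q)
      (Ioo 0 1 ×ˢ Ioo (-π) π) := by
  have hT : volume.restrict (Ioo (0 : ℝ) 1 ×ˢ Ioo (-π) π) =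
      (volume.restrict (Ioo (0 : ℝ) 1)).prod (volume.restrict (Ioo (-π) π)) := by
    rw [Measure.volume_eq_prod, Measure.prod_restrict]
  have hbound : IntegrableOn (fun p : ℝ × ℝ => ‖ω p.1‖ * 1) (Ioo 0 1 ×ˢ Ioo (-π) π) := by
    rw [IntegrableOn, hT]
    exact hint.norm.mul_prod (integrable_const 1)
  refine (hbound.div_const ((1 - t) ^ q)).mono' ?_ ?_
  · rw [hT]
    have hden : Measurable fun p : ℝ × ℝ => ‖1 - t * (p.1 * exp (p.2 * I))‖ ^ q := by fun_prop
    exact (continuous_fst.aestronglyMeasurable.mul hint.aestronglyMeasurable.comp_fst).div₀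
      hden.aestronglyMeasurable
  refine ae_restrict_of_forall_mem (measurableSet_Ioo.prod measurableSet_Ioo) fun p hp => ?_
  have hden := one_sub_le_norm_one_sub_ofReal_mul_polar ht₀ hp.1.1.le hp.1.2.le p.2
  have ht₁ : 0 < 1 - t := by linarith
  rw [norm_div, norm_mul, Real.norm_of_nonneg hp.1.1.le,
    Real.norm_of_nonneg (by positivity : (0 : ℝ) ≤ ‖1 - t * (p.1 * exp (p.2 * I))‖ ^ q), mul_one]
  calc p.1 * ‖ω p.1‖ / ‖1 - t * (p.1 * exp (p.2 * I))‖ ^ q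
      ≤ 1 * ‖ω p.1‖ / ‖1 - t * (p.1 * exp (p.2 * I))‖ ^ q := by gcongr; exact hp.1.2.le
    _ ≤ ‖ω p.1‖ / (1 - t) ^ q := by rw [one_mul]; gcongr

theorem integral_id_mul_le_integral_ball_kernel {ω : ℝ → ℝ} (hω : ∀ s, 0 ≤ ω s)
    (hint : IntegrableOn ω (Ioo 0 1)) {q r t : ℝ} (hq : 0 ≤ q) (hr : 0 ≤ r) (hrt : r ≤ t)
    (ht : t < 1) :
    2 * (1 - r) * ∫ s in r..1, s * ω s ≤
      (3 * (1 - r)) ^ q * ∫ z in Metric.ball (0 : ℂ) 1, ω ‖z‖ / ‖1 - t * z‖ ^ q := by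
  set D : ℝ × ℝ → ℝ := fun p => ‖1 - t * (p.1 * exp (p.2 * I))‖
  set T := Ioo (0 : ℝ) 1 ×ˢ Ioo (-π) π
  set S := Ioo r 1 ×ˢ Ioo (-(1 - r)) (1 - r)
  set E := (3 * (1 - r)) ^ q
  have hr₁ : r < 1 := by linarith
  have hE : 0 < E := by positivity
  have hST : S ⊆ T := prod_mono (Ioo_subset_Ioo_left hr)
    (Ioo_subset_Ioo (by linarith [pi_gt_three]) (by linarith [pi_gt_three]))
  have hK_int : IntegrableOn (fun p => p.1 * ω p.1 / D p ^ q) T :=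
    integrableOn_polar_kernel hint hq (hr.trans hrt) ht
  have hpolar : ∫ z in Metric.ball (0 : ℂ) 1, ω ‖z‖ / ‖1 - t * z‖ ^ q =
      ∫ p in T, p.1 * ω p.1 / D p ^ q := by
    rw [integral_ball_eq_integral_polar]
    refine setIntegral_congr_fun (measurableSet_Ioo.prod measurableSet_Ioo) fun p hp => ?_
    simp [D, abs_of_pos hp.1.1, mul_div_assoc]
  have hsector : ∫ p in S, p.1 * ω p.1 / E ≤ ∫ p in S, p.1 * ω p.1 / D p ^ q := by
    refine integral_mono_of_nonneg ?_ (hK_int.mono_set hST) ?_ <;>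
      refine ae_restrict_of_forall_mem (measurableSet_Ioo.prod measurableSet_Ioo) fun p hp => ?_
    · exact div_nonneg (mul_nonneg (hr.trans hp.1.1.le) (hω p.1)) hE.le
    · have := hω p.1
      have := hr.trans hp.1.1.le
      have hD : 0 < D p := by
        linarith [one_sub_le_norm_one_sub_ofReal_mul_polar (hr.trans hrt) this hp.1.2.le p.2]
      dsimp only
      gcongr
      exact rpow_le_rpow hD.le (norm_one_sub_ofReal_mul_polar_le hr hp.1.1.le hp.1.2.le hrt ht.le
        (abs_le.2 ⟨hp.2.1.le, hp.2.2.le⟩)) hq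
  have hK_nonneg : ∀ p ∈ T, 0 ≤ p.1 * ω p.1 / D p ^ q := fun p hp => by
    have := hω p.1
    have := hp.1.1
    positivity
  have hsector_eq : ∫ p in S, p.1 * ω p.1 / E = 2 * (1 - r) * (∫ s in r..1, s * ω s) / E := by
    rw [setIntegral_prod_Ioo_fst (fun s => s * ω s / E) _ (by linarith), integral_div,
      intervalIntegral.integral_of_le hr₁.le, integral_Ioc_eq_integral_Ioo]
    ring
  calc 2 * (1 - r) * ∫ s in r..1, s * ω s = E * ∫ p in S, p.1 * ω p.1 / E := by
        rw [hsector_eq]; field_simp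
    _ ≤ E * ∫ p in T, p.1 * ω p.1 / D p ^ q := by
        gcongr
        exact hsector.trans (setIntegral_mono_set hK_int
          (ae_restrict_of_forall_mem (measurableSet_Ioo.prod measurableSet_Ioo) hK_nonneg)
          hST.eventuallyLE)
    _ = _ := by rw [hpolar]

theorem mul_integral_le_integral_id_mul {f : ℝ → ℝ} {a b : ℝ} (hab : a ≤ b)
    (hf : IntervalIntegrable f volume a b) (hf₀ : ∀ s ∈ Icc a b, 0 ≤ f s) :
    a * ∫ s in a..b, f s ≤ ∫ s in a..b, s * f s := by
  rw [← intervalIntegral.integral_const_mul]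
  refine intervalIntegral.integral_mono_on hab (hf.const_mul a)
    (hf.continuousOn_mul continuousOn_id) fun s hs => ?_
  exact mul_le_mul_of_nonneg_right hs.1 (hf₀ s hs)

theorem exists_pos_integral_le_two_mul_integral {ω : ℝ → ℝ} (hω : ∀ s, 0 ≤ ω s)
    (hint : IntervalIntegrable ω volume 0 1) :
    ∃ ρ, 0 < ρ ∧ ρ ≤ 1 ∧ ∫ s in (0 : ℝ)..1, ω s ≤ 2 * ∫ s in ρ..1, ω s := by
  set W : ℝ → ℝ := fun r => ∫ s in r..1, ω s
  rcases (intervalIntegral.integral_nonneg zero_le_one fun s _ => hω s).eq_or_lt with h0 | h0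
  · exact ⟨1, one_pos, le_rfl, by simpa using h0.ge⟩
  have hcont : ContinuousWithinAt W (Ioo 0 1) 0 :=
    (intervalIntegral.continuousOn_primitive_interval_left
      ((intervalIntegrable_iff' (f := ω)).1 hint) 0 left_mem_uIcc).mono
      (Ioo_subset_Icc_self.trans_eq (uIcc_of_le zero_le_one).symm)
  have := left_nhdsWithin_Ioo_neBot (zero_lt_one' ℝ)
  obtain ⟨ρ, hρW, hρ⟩ := (((hcont.const_mul 2).eventually_const_lt (by linarith)).and
    self_mem_nhdsWithin).exists
  exact ⟨ρ, hρ.1, hρ.2.le, hρW.le⟩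

theorem exists_integral_le_const_mul_integral_id_mul {ω : ℝ → ℝ} (hω : ∀ s, 0 ≤ ω s)
    (hint : IntervalIntegrable ω volume 0 1) :
    ∃ A, 0 < A ∧ ∀ r, 0 ≤ r → r ≤ 1 → ∫ s in r..1, ω s ≤ A * ∫ s in r..1, s * ω s := by
  have hint_tail : ∀ {f : ℝ → ℝ}, IntervalIntegrable f volume 0 1 → ∀ r, 0 ≤ r → r ≤ 1 →
      IntervalIntegrable f volume r 1 := fun hf r hr hr₁ =>
    hf.mono_set (uIcc_subset_uIcc (mem_uIcc_of_le hr hr₁) right_mem_uIcc)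
  have hmul : ∀ r, 0 ≤ r → r ≤ 1 → r * ∫ s in r..1, ω s ≤ ∫ s in r..1, s * ω s :=
    fun r hr hr₁ => mul_integral_le_integral_id_mul hr₁ (hint_tail hint r hr hr₁) fun s _ => hω s
  obtain ⟨ρ, hρ₀, hρ₁, hρ⟩ := exists_pos_integral_le_two_mul_integral hω hint
  refine ⟨2 / ρ, by positivity, fun r hr hr₁ => ?_⟩
  rw [div_mul_eq_mul_div, le_div_iff₀ hρ₀]
  rcases le_total ρ r with hρr | hrρ
  · nlinarith [hmul r hr hr₁, intervalIntegral.integral_nonneg (μ := volume) hr₁ fun s _ => hω s]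
  calc (∫ s in r..1, ω s) * ρ ≤ (∫ s in (0 : ℝ)..1, ω s) * ρ := by
        gcongr
        exact intervalIntegral.integral_mono_interval hr hr₁ le_rfl (ae_of_all _ hω) hint
    _ ≤ 2 * (ρ * ∫ s in ρ..1, ω s) := by nlinarith
    _ ≤ 2 * ∫ s in ρ..1, s * ω s := by gcongr; exact hmul ρ hρ₀.le hρ₁
    _ ≤ 2 * ∫ s in r..1, s * ω s := by
        gcongr 2 * ?_
        refine intervalIntegral.integral_mono_interval hrρ hρ₁ le_rfl
          (ae_restrict_of_forall_mem measurableSet_Ioc fun s hs =>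
            mul_nonneg (hr.trans hs.1.le) (hω s))
          (hint_tail (hint.continuousOn_mul continuousOn_id) r hr hr₁)

theorem kernel_bound_to_essentially_increasing (ω : ℝ → ℝ) (hω : ∀ s, 0 ≤ ω s)
    (hint : IntegrableOn ω (Set.Ico (0:ℝ) 1))
    (lam C : ℝ) (hlam : 0 < lam) (hC : 0 < C)
    (h : ∀ ξ ∈ Metric.ball (0:ℂ) 1,
      (∫ z in Metric.ball (0:ℂ) 1,
          ω ‖z‖ / ‖1 - (starRingEnd ℂ) ξ * z‖ ^ (lam + 1)) ≤
        C * ((∫ s in ‖ξ‖..1, ω s) / (1 - ‖ξ‖) ^ lam)) :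
    ∃ C' : ℝ, 0 < C' ∧ ∀ r t : ℝ, 0 ≤ r → r ≤ t → t < 1 →
      (∫ s in r..1, ω s) / (1 - r) ^ lam ≤ C' * ((∫ s in t..1, ω s) / (1 - t) ^ lam) := by
  obtain ⟨A, hA, hωA⟩ := exists_integral_le_const_mul_integral_id_mul hω
    ((intervalIntegrable_iff_integrableOn_Ico_of_le zero_le_one).2 hint)
  refine ⟨A * 3 ^ (lam + 1) * C / 2, by positivity, fun r t hr hrt ht => ?_⟩
  have ht₀ : 0 ≤ t := hr.trans hrt
  have hr₁ : 0 < 1 - r := by linarith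
  set J := ∫ s in r..1, s * ω s
  set φt := (∫ s in t..1, ω s) / (1 - t) ^ lam
  have hkernel := integral_id_mul_le_integral_ball_kernel hω (hint.mono_set Ioo_subset_Ico_self)
    (by linarith : 0 ≤ lam + 1) hr hrt ht
  have hξ := h t (by simpa [abs_of_nonneg ht₀] using ht)
  rw [conj_ofReal, norm_real, Real.norm_of_nonneg ht₀] at hξ
  have hJ : 2 * J ≤ 3 ^ (lam + 1) * (1 - r) ^ lam * (C * φt) := by
    refine le_of_mul_le_mul_left ?_ hr₁
    calc (1 - r) * (2 * J) = 2 * (1 - r) * J := by ring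
      _ ≤ (3 * (1 - r)) ^ (lam + 1) * (C * φt) := hkernel.trans (by gcongr)
      _ = (1 - r) * (3 ^ (lam + 1) * (1 - r) ^ lam * (C * φt)) := by
          rw [mul_rpow (by norm_num) hr₁.le, rpow_add_one hr₁.ne']
          ring
  rw [div_le_iff₀ (by positivity)]
  calc ∫ s in r..1, ω s ≤ A * J := hωA r hr (by linarith)
    _ ≤ A * (3 ^ (lam + 1) * (1 - r) ^ lam * (C * φt) / 2) := by gcongr; linarith
    _ = A * 3 ^ (lam + 1) * C / 2 * φt * (1 - r) ^ lam := by ring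
end

section
/- Let ω : [0,1) → [0,∞) be integrable with ω̂(r) = ∫_r^1 ω(s) ds. Suppose there exists η > 0 and C > 0 such that ∫₀^1 s^x ω(s) ds ≤ C (y/x)^η ∫₀^1 s^y ω(s) ds for all 0 < x ≤ y < ∞. Then there exists C' > 1 such that ω̂(r) ≤ C' ω̂((1+r)/2) for all 0 ≤ r < 1, i.e., ω is a doubling weight. -/
/-!
Write `M(x) = ∫₀¹ sˣ ω(s) ds` and `ω̂(t) = ∫ₜ¹ ω`. Splitting `M(y)` at `t` gives
`M(y) ≤ t^(y-x) M(x) + ω̂(t)`. Apply this with `y = K x`, where `K` is so large that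
`C K^η e^(1-K) ≤ 1/2`, and with `x = (1-t)⁻¹`, so that `t^((K-1)x) ≤ e^(1-K)`: the moment condition
then lets `M(x)` absorb its own bound, leaving `M((1-t)⁻¹) ≤ 2 C K^η ω̂(t)`. On the other hand
`r^x ω̂(r) ≤ M(x)`, and for `r ≥ 1/2`, `t = (1+r)/2` one has `r^((1-t)⁻¹) ≥ e^(-4)`, which gives the
doubling inequality for `r ≥ 1/2`. For `r < 1/2` it suffices to compare `ω̂(0)` with `ω̂(3/4)`; if
`ω̂(3/4) = 0` the estimate forces a moment to vanish, so `ω = 0` almost everywhere on `[0, 1]`.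
-/

open MeasureTheory Set

noncomputable section

def weightMoment (ω : ℝ → ℝ) (x : ℝ) : ℝ := ∫ s in (0:ℝ)..1, s ^ x * ω s

/-- The paper's `ω̂`. -/
def weightTail (ω : ℝ → ℝ) (r : ℝ) : ℝ := ∫ s in r..1, ω s

end

lemma MeasureTheory.IntegrableOn.intervalIntegrable_of_mem_Icc {f : ℝ → ℝ} {a b : ℝ}
    (hf : IntegrableOn f (Icc a b)) ⦃c d : ℝ⦄ (hc : c ∈ Icc a b) (hd : d ∈ Icc a b) :
    IntervalIntegrable f volume c d :=
  (hf.mono_set (uIcc_subset_Icc hc hd)).intervalIntegrable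

lemma MeasureTheory.IntegrableOn.rpow_mul {f : ℝ → ℝ} {x : ℝ} (hf : IntegrableOn f (Icc 0 1))
    (hx : 0 ≤ x) :
    IntegrableOn (fun s => s ^ x * f s) (Icc 0 1) :=
  hf.continuousOn_mul (Real.continuous_rpow_const hx).continuousOn isCompact_Icc

lemma rpow_le_rpow_sub_mul_rpow {u t x y : ℝ} (hu : 0 ≤ u) (hut : u ≤ t) (hx : 0 < x)
    (hxy : x ≤ y) : u ^ y ≤ t ^ (y - x) * u ^ x := by
  rcases hu.eq_or_lt with rfl | hu
  · rw [Real.zero_rpow (hx.trans_le hxy).ne', Real.zero_rpow hx.ne', mul_zero]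
  calc u ^ y = u ^ (y - x) * u ^ x := by rw [← Real.rpow_add hu, sub_add_cancel]
    _ ≤ t ^ (y - x) * u ^ x := by gcongr

lemma inv_one_sub_mul_log_le_neg_one {t : ℝ} (ht : 0 < t) (ht1 : t < 1) :
    (1 - t)⁻¹ * Real.log t ≤ -1 := by
  have h1t : 0 < 1 - t := by linarith
  calc (1 - t)⁻¹ * Real.log t ≤ (1 - t)⁻¹ * (t - 1) :=
        mul_le_mul_of_nonneg_left (Real.log_le_sub_one_of_pos ht) (inv_nonneg.mpr h1t.le)
    _ = -1 := by field_simp; ring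

lemma exp_neg_four_le_rpow {r : ℝ} (hr : 1 / 2 ≤ r) (hr1 : r < 1) :
    Real.exp (-4) ≤ r ^ (1 - (1 + r) / 2)⁻¹ := by
  have hr0 : 0 < r := by linarith
  have h1r : 1 - r ≠ 0 := by linarith
  have hx : (1 - (1 + r) / 2)⁻¹ = 2 / (1 - r) := by
    rw [show 1 - (1 + r) / 2 = (1 - r) / 2 by ring, inv_div]
  rw [hx, Real.rpow_def_of_pos hr0, Real.exp_le_exp]
  have hlog : 1 - r⁻¹ ≤ Real.log r := Real.one_sub_inv_le_log_of_pos hr0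
  calc -4 ≤ -(2 / r) := by rw [neg_le_neg_iff, div_le_iff₀ hr0]; linarith
    _ = (1 - r⁻¹) * (2 / (1 - r)) := by field_simp; ring
    _ ≤ Real.log r * (2 / (1 - r)) := by gcongr

lemma exists_one_le_mul_rpow_mul_exp_le (C η : ℝ) {ε : ℝ} (hε : 0 < ε) :
    ∃ K : ℝ, 1 ≤ K ∧ C * K ^ η * Real.exp (1 - K) ≤ ε := by
  have hlim : Filter.Tendsto (fun K : ℝ => C * K ^ η * Real.exp (1 - K)) Filter.atTop (nhds 0) := by
    have h := (tendsto_rpow_mul_exp_neg_mul_atTop_nhds_zero η 1 one_pos).const_mul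
      (C * Real.exp 1)
    rw [mul_zero] at h
    refine h.congr fun K => ?_
    rw [Real.exp_sub, neg_one_mul, Real.exp_neg]
    field_simp
  exact ((Filter.eventually_ge_atTop 1).and (hlim.eventually (eventually_le_nhds hε))).exists

section Weight

variable {ω : ℝ → ℝ}

lemma weightTail_nonneg (hω : ∀ s, 0 ≤ ω s) {r : ℝ} (hr : r ≤ 1) : 0 ≤ weightTail ω r :=
  intervalIntegral.integral_nonneg_of_forall hr hω

lemma weightMoment_nonneg (hω : ∀ s, 0 ≤ ω s) (x : ℝ) : 0 ≤ weightMoment ω x :=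
  intervalIntegral.integral_nonneg zero_le_one fun s hs =>
    mul_nonneg (Real.rpow_nonneg hs.1 x) (hω s)

lemma weightTail_anti (hω : ∀ s, 0 ≤ ω s) (hint : IntegrableOn ω (Icc 0 1)) {a b : ℝ}
    (ha : 0 ≤ a) (hab : a ≤ b) (hb : b ≤ 1) : weightTail ω b ≤ weightTail ω a :=
  intervalIntegral.integral_mono_interval hab hb le_rfl (Filter.Eventually.of_forall hω)
    (hint.intervalIntegrable_of_mem_Icc ⟨ha, hab.trans hb⟩ ⟨zero_le_one, le_rfl⟩)

lemma rpow_mul_weightTail_le_weightMoment (hω : ∀ s, 0 ≤ ω s) (hint : IntegrableOn ω (Icc 0 1))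
    {r x : ℝ} (hr : 0 ≤ r) (hr1 : r ≤ 1) (hx : 0 ≤ x) :
    r ^ x * weightTail ω r ≤ weightMoment ω x := by
  have hmom := hint.rpow_mul hx
  calc r ^ x * weightTail ω r = ∫ s in r..1, r ^ x * ω s :=
        (intervalIntegral.integral_const_mul _ _).symm
    _ ≤ ∫ s in r..1, s ^ x * ω s := by
        refine intervalIntegral.integral_mono_on hr1
          ((hint.intervalIntegrable_of_mem_Icc ⟨hr, hr1⟩ ⟨zero_le_one, le_rfl⟩).const_mul _)
          (hmom.intervalIntegrable_of_mem_Icc ⟨hr, hr1⟩ ⟨zero_le_one, le_rfl⟩) fun s hs => ?_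
        exact mul_le_mul_of_nonneg_right (Real.rpow_le_rpow hr hs.1 hx) (hω s)
    _ ≤ weightMoment ω x :=
        intervalIntegral.integral_mono_interval hr hr1 le_rfl
          ((ae_restrict_iff' measurableSet_Ioc).mpr (Filter.Eventually.of_forall
            fun s hs => mul_nonneg (Real.rpow_nonneg hs.1.le x) (hω s)))
          (hmom.intervalIntegrable_of_mem_Icc ⟨le_rfl, zero_le_one⟩ ⟨zero_le_one, le_rfl⟩)


lemma weightMoment_le_rpow_mul_add_weightTail (hω : ∀ s, 0 ≤ ω s)
    (hint : IntegrableOn ω (Icc 0 1)) {t x y : ℝ} (ht : 0 < t) (ht1 : t ≤ 1) (hx : 0 < x)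
    (hxy : x ≤ y) : weightMoment ω y ≤ t ^ (y - x) * weightMoment ω x + weightTail ω t := by
  have hy : 0 < y := hx.trans_le hxy
  have h0t : t ∈ Icc (0:ℝ) 1 := ⟨ht.le, ht1⟩
  have hmx := (hint.rpow_mul hx.le).intervalIntegrable_of_mem_Icc
  have hmy := (hint.rpow_mul hy.le).intervalIntegrable_of_mem_Icc
  have hlow : ∫ s in (0:ℝ)..t, s ^ y * ω s ≤ t ^ (y - x) * weightMoment ω x :=
    calc ∫ s in (0:ℝ)..t, s ^ y * ω s ≤ ∫ s in (0:ℝ)..t, t ^ (y - x) * (s ^ x * ω s) := by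
          refine intervalIntegral.integral_mono_on ht.le (hmy ⟨le_rfl, zero_le_one⟩ h0t)
            ((hmx ⟨le_rfl, zero_le_one⟩ h0t).const_mul _) fun s hs => ?_
          rw [← mul_assoc]
          exact mul_le_mul_of_nonneg_right (rpow_le_rpow_sub_mul_rpow hs.1 hs.2 hx hxy) (hω s)
      _ ≤ t ^ (y - x) * weightMoment ω x := by
          rw [intervalIntegral.integral_const_mul]
          gcongr
          exact intervalIntegral.integral_mono_interval le_rfl ht.le ht1
            ((ae_restrict_iff' measurableSet_Ioc).mpr (Filter.Eventually.of_forall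
              fun s hs => mul_nonneg (Real.rpow_nonneg hs.1.le x) (hω s)))
            (hmx ⟨le_rfl, zero_le_one⟩ ⟨zero_le_one, le_rfl⟩)
  have hhigh : ∫ s in t..1, s ^ y * ω s ≤ weightTail ω t := by
    refine intervalIntegral.integral_mono_on ht1 (hmy h0t ⟨zero_le_one, le_rfl⟩)
      (hint.intervalIntegrable_of_mem_Icc h0t ⟨zero_le_one, le_rfl⟩) fun s hs => ?_
    exact mul_le_of_le_one_left (hω s) (Real.rpow_le_one (ht.le.trans hs.1) hs.2 hy.le)
  rw [weightMoment, ← intervalIntegral.integral_add_adjacent_intervals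
    (hmy ⟨le_rfl, zero_le_one⟩ h0t) (hmy h0t ⟨zero_le_one, le_rfl⟩)]
  exact add_le_add hlow hhigh


lemma exists_weightMoment_le_mul_weightTail (hω : ∀ s, 0 ≤ ω s)
    (hint : IntegrableOn ω (Icc 0 1)) {η C : ℝ} (hC : 0 ≤ C)
    (h : ∀ x y : ℝ, 0 < x → x ≤ y → weightMoment ω x ≤ C * (y / x) ^ η * weightMoment ω y) :
    ∃ A : ℝ, 0 ≤ A ∧
      ∀ t : ℝ, 0 < t → t < 1 → weightMoment ω (1 - t)⁻¹ ≤ A * weightTail ω t := by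
  obtain ⟨K, hK1, hK⟩ := exists_one_le_mul_rpow_mul_exp_le C η one_half_pos
  have hD : 0 ≤ C * K ^ η := mul_nonneg hC (Real.rpow_nonneg (zero_le_one.trans hK1) η)
  refine ⟨2 * (C * K ^ η), by positivity, fun t ht ht1 => ?_⟩
  set x := (1 - t)⁻¹
  have hx : 0 < x := inv_pos.mpr (by linarith)
  have hxKx : x ≤ K * x := le_mul_of_one_le_left hx.le hK1
  have hdecay : t ^ (K * x - x) ≤ Real.exp (1 - K) := by
    rw [Real.rpow_def_of_pos ht, Real.exp_le_exp]
    calc Real.log t * (K * x - x) = (K - 1) * (x * Real.log t) := by ring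
      _ ≤ (K - 1) * (-1) :=
          mul_le_mul_of_nonneg_left (inv_one_sub_mul_log_le_neg_one ht ht1) (by linarith)
      _ = 1 - K := by ring
  have hmoment := h x (K * x) hx hxKx
  rw [mul_div_cancel_right₀ K hx.ne'] at hmoment
  have hM := weightMoment_nonneg hω x
  have key : weightMoment ω x ≤ 1 / 2 * weightMoment ω x + C * K ^ η * weightTail ω t :=
    calc weightMoment ω x ≤ C * K ^ η * weightMoment ω (K * x) := hmoment
      _ ≤ C * K ^ η * (t ^ (K * x - x) * weightMoment ω x + weightTail ω t) :=
          mul_le_mul_of_nonneg_left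
            (weightMoment_le_rpow_mul_add_weightTail hω hint ht ht1.le hx hxKx) hD
      _ ≤ C * K ^ η * (Real.exp (1 - K) * weightMoment ω x + weightTail ω t) := by gcongr
      _ = C * K ^ η * Real.exp (1 - K) * weightMoment ω x + C * K ^ η * weightTail ω t := by
          ring
      _ ≤ 1 / 2 * weightMoment ω x + C * K ^ η * weightTail ω t := by gcongr
  linarith

lemma weightTail_zero_eq_zero_of_weightMoment_eq_zero (hω : ∀ s, 0 ≤ ω s)
    (hint : IntegrableOn ω (Icc 0 1)) {x : ℝ} (hx : 0 ≤ x) (h0 : weightMoment ω x = 0) :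
    weightTail ω 0 = 0 := by
  have hnn : 0 ≤ᵐ[volume.restrict (Ioc 0 1)] fun s => s ^ x * ω s :=
    (ae_restrict_iff' measurableSet_Ioc).mpr (Filter.Eventually.of_forall
      fun s hs => mul_nonneg (Real.rpow_nonneg hs.1.le x) (hω s))
  rw [weightMoment, intervalIntegral.integral_of_le zero_le_one,
    integral_eq_zero_iff_of_nonneg_ae hnn
      ((hint.rpow_mul hx).mono_set Ioc_subset_Icc_self)] at h0
  rw [weightTail, intervalIntegral.integral_of_le zero_le_one]
  refine integral_eq_zero_of_ae ?_
  filter_upwards [h0, ae_restrict_mem measurableSet_Ioc] with s hs hmem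
  exact (mul_eq_zero.mp hs).resolve_left (Real.rpow_pos_of_pos hmem.1 x).ne'

lemma exists_weightTail_zero_le_mul_weightTail (hω : ∀ s, 0 ≤ ω s)
    (hint : IntegrableOn ω (Icc 0 1)) {A : ℝ}
    (hA : ∀ t : ℝ, 0 < t → t < 1 → weightMoment ω (1 - t)⁻¹ ≤ A * weightTail ω t)
    {t : ℝ} (ht : 0 < t) (ht1 : t < 1) : ∃ B : ℝ, 0 ≤ B ∧ weightTail ω 0 ≤ B * weightTail ω t := by
  by_cases h0 : weightTail ω t = 0
  · have hx : 0 ≤ (1 - t)⁻¹ := inv_nonneg.mpr (by linarith)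
    have hM : weightMoment ω (1 - t)⁻¹ = 0 :=
      le_antisymm (by simpa [h0] using hA t ht ht1) (weightMoment_nonneg hω _)
    exact ⟨0, le_rfl, by
      rw [weightTail_zero_eq_zero_of_weightMoment_eq_zero hω hint hx hM, zero_mul]⟩
  · exact ⟨weightTail ω 0 / weightTail ω t,
      div_nonneg (weightTail_nonneg hω zero_le_one) (weightTail_nonneg hω ht1.le),
      (div_mul_cancel₀ _ h0).ge⟩

lemma weightTail_le_mul_weightTail_midpoint (hω : ∀ s, 0 ≤ ω s)
    (hint : IntegrableOn ω (Icc 0 1)) {A : ℝ}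
    (hA : ∀ t : ℝ, 0 < t → t < 1 → weightMoment ω (1 - t)⁻¹ ≤ A * weightTail ω t)
    {r : ℝ} (hr : 1 / 2 ≤ r) (hr1 : r < 1) :
    weightTail ω r ≤ Real.exp 4 * A * weightTail ω ((1 + r) / 2) := by
  have hx : 0 ≤ (1 - (1 + r) / 2)⁻¹ := inv_nonneg.mpr (by linarith)
  have hTr := weightTail_nonneg hω hr1.le
  calc weightTail ω r = Real.exp 4 * (Real.exp (-4) * weightTail ω r) := by
        rw [← mul_assoc, ← Real.exp_add, add_neg_cancel, Real.exp_zero, one_mul]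
    _ ≤ Real.exp 4 * (r ^ (1 - (1 + r) / 2)⁻¹ * weightTail ω r) := by
        gcongr; exact exp_neg_four_le_rpow hr hr1
    _ ≤ Real.exp 4 * weightMoment ω (1 - (1 + r) / 2)⁻¹ := by
        gcongr; exact rpow_mul_weightTail_le_weightMoment hω hint (by linarith) hr1.le hx
    _ ≤ Real.exp 4 * (A * weightTail ω ((1 + r) / 2)) := by
        gcongr; exact hA _ (by linarith) (by linarith)
    _ = Real.exp 4 * A * weightTail ω ((1 + r) / 2) := (mul_assoc _ _ _).symm

end Weight

theorem moment_condition_to_doubling_general (ω : ℝ → ℝ) (hω : ∀ s, 0 ≤ ω s)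
    (hint : IntegrableOn ω (Set.Ico (0:ℝ) 1))
    (η C : ℝ) (hC : 0 < C)
    (h : ∀ x y : ℝ, 0 < x → x ≤ y →
      (∫ s in (0:ℝ)..1, s ^ x * ω s) ≤ C * (y / x) ^ η * ∫ s in (0:ℝ)..1, s ^ y * ω s) :
    ∃ C' : ℝ, 1 < C' ∧ ∀ r : ℝ, 0 ≤ r → r < 1 →
      (∫ s in r..1, ω s) ≤ C' * ∫ s in ((1 + r) / 2)..1, ω s := by
  rw [← integrableOn_Icc_iff_integrableOn_Ico] at hint
  obtain ⟨A, hA0, hA⟩ := exists_weightMoment_le_mul_weightTail hω hint hC.le h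
  obtain ⟨B, hB0, hB⟩ := exists_weightTail_zero_le_mul_weightTail hω hint hA
    (t := 3 / 4) (by norm_num) (by norm_num)
  have hE : 0 ≤ Real.exp 4 * A := by positivity
  refine ⟨2 + Real.exp 4 * A + B, by linarith, fun r hr hr1 => ?_⟩
  have hmid := weightTail_nonneg hω (r := (1 + r) / 2) (by linarith)
  show weightTail ω r ≤ _ * weightTail ω ((1 + r) / 2)
  rcases lt_or_ge r (1 / 2) with hsmall | hlarge
  · calc weightTail ω r ≤ weightTail ω 0 := weightTail_anti hω hint le_rfl hr hr1.le
      _ ≤ B * weightTail ω (3 / 4) := hB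
      _ ≤ B * weightTail ω ((1 + r) / 2) :=
          mul_le_mul_of_nonneg_left
            (weightTail_anti hω hint (by linarith) (by linarith) (by norm_num)) hB0
      _ ≤ _ := mul_le_mul_of_nonneg_right (by linarith) hmid
  · calc weightTail ω r ≤ Real.exp 4 * A * weightTail ω ((1 + r) / 2) :=
          weightTail_le_mul_weightTail_midpoint hω hint hA hlarge hr1
      _ ≤ _ := mul_le_mul_of_nonneg_right (by linarith) hmid

theorem moment_condition_to_doubling (ω : ℝ → ℝ) (hω : ∀ s, 0 ≤ ω s)
    (hint : IntegrableOn ω (Set.Ico (0:ℝ) 1))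
    (η C : ℝ) (hη : 0 < η) (hC : 0 < C)
    (h : ∀ x y : ℝ, 0 < x → x ≤ y →
      (∫ s in (0:ℝ)..1, s ^ x * ω s) ≤ C * (y / x) ^ η * ∫ s in (0:ℝ)..1, s ^ y * ω s) :
    ∃ C' : ℝ, 1 < C' ∧ ∀ r : ℝ, 0 ≤ r → r < 1 →
      (∫ s in r..1, ω s) ≤ C' * ∫ s in ((1 + r) / 2)..1, ω s :=
  moment_condition_to_doubling_general ω hω hint η C hC h
end

section
/- Let ω : [0,1) → [0,∞) be integrable with ω̂(r) = ∫_r^1 ω(s) ds satisfying the doubling condition ω̂(r) ≤ C ω̂((1+r)/2) for all r ∈ [0,1). For t ∈ (3/4, 1), one has ∫₀^1 s^{1/(1-t)} ω(s) ds ≤ C' ω̂(t) for a constant C' independent of t. -/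
open MeasureTheory Set Filter Topology Real intervalIntegral

/-!
Cut `[0, t]` at the points `1 - 2 ^ k (1 - t)`, whose distance to `1` doubles at each step. On the
`k`-th piece `s ^ (1 / (1 - t)) ≤ (1 - 2 ^ k (1 - t)) ^ (1 / (1 - t)) ≤ exp (-2 ^ k)`, while `k + 1`
applications of the doubling condition bound the mass of `ω` beyond the piece's left end by
`C ^ (k + 1) ω̂(t)`. The doubly exponential decay beats the exponential growth, so the pieces add up
to at most `C ∑ₖ exp (-2 ^ k) C ^ k` times `ω̂(t)`; the rest, `[t, 1]`, contributes at most `ω̂(t)`.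
-/

lemma summable_exp_neg_two_pow_mul_pow (C : ℝ) :
    Summable fun k : ℕ => exp (-2 ^ k) * C ^ k := by
  have hlim : Tendsto (fun k : ℕ => exp (-2 ^ k) * |C|) atTop (𝓝 0) := by
    simpa using (tendsto_exp_neg_atTop_nhds_zero.comp
      (tendsto_pow_atTop_atTop_of_one_lt one_lt_two)).mul_const |C|
  refine summable_of_ratio_norm_eventually_le (r := 1 / 2) (by norm_num) ?_
  filter_upwards [hlim.eventually (ge_mem_nhds (by norm_num : (0 : ℝ) < 1 / 2))] with k hk
  have hexp : exp (-2 ^ (k + 1)) = exp (-2 ^ k) * exp (-2 ^ k) := by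
    rw [← exp_add, pow_succ]; ring_nf
  calc ‖exp (-2 ^ (k + 1)) * C ^ (k + 1)‖
      = exp (-2 ^ k) * |C| * ‖exp (-2 ^ k) * C ^ k‖ := by
        simp only [norm_mul, norm_pow, norm_eq_abs, abs_exp]
        rw [hexp, pow_succ]
        ring
    _ ≤ 1 / 2 * ‖exp (-2 ^ k) * C ^ k‖ := by gcongr

lemma rpow_le_exp_neg_mul_of_le_max {s x p : ℝ} (hs : 0 ≤ s) (hsx : s ≤ max 0 (1 - x))
    (hp : 0 < p) : s ^ p ≤ exp (-(x * p)) := by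
  rcases le_max_iff.mp hsx with hs0 | hsx
  · rw [le_antisymm hs0 hs, zero_rpow hp.ne']
    exact (exp_pos _).le
  · calc s ^ p ≤ exp (-x) ^ p :=
          rpow_le_rpow hs (hsx.trans (by linarith [add_one_le_exp (-x)])) hp.le
      _ = exp (-(x * p)) := by rw [← exp_mul]; ring_nf

lemma sum_integral_adjacent_intervals_rev {E : Type*} [NormedAddCommGroup E] [NormedSpace ℝ E]
    {f : ℝ → E} {μ : Measure ℝ} {a : ℕ → ℝ} {n : ℕ}
    (hf : ∀ k < n, IntervalIntegrable f μ (a (k + 1)) (a k)) :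
    ∑ k ∈ Finset.range n, ∫ x in a (k + 1)..a k, f x ∂μ = ∫ x in a n..a 0, f x ∂μ := by
  rw [integral_symm, ← sum_integral_adjacent_intervals fun k hk => (hf k hk).symm,
    ← Finset.sum_neg_distrib]
  exact Finset.sum_congr rfl fun k _ => integral_symm _ _

lemma IntervalIntegrable.mono_Icc {E : Type*} [NormedAddCommGroup E] {f : ℝ → E} {μ : Measure ℝ}
    {a b c d : ℝ} (hf : IntervalIntegrable f μ a b) (hc : c ∈ Icc a b) (hd : d ∈ Icc a b) :
    IntervalIntegrable f μ c d :=
  hf.mono_set (uIcc_subset_uIcc (Icc_subset_uIcc hc) (Icc_subset_uIcc hd))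

lemma IntervalIntegrable.rpow_mul {f : ℝ → ℝ} {μ : Measure ℝ} {a b p : ℝ}
    (hf : IntervalIntegrable f μ a b) (hp : 0 ≤ p) :
    IntervalIntegrable (fun s => s ^ p * f s) μ a b :=
  hf.continuousOn_mul (continuous_rpow_const hp).continuousOn

lemma integral_rpow_mul_le_integral {ω : ℝ → ℝ} {a b p : ℝ} (hω : ∀ s, 0 ≤ ω s)
    (hI : IntervalIntegrable ω volume a b) (ha : 0 ≤ a) (hab : a ≤ b) (hb : b ≤ 1) (hp : 0 ≤ p) :
    ∫ s in a..b, s ^ p * ω s ≤ ∫ s in a..b, ω s :=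
  integral_mono_on hab (hI.rpow_mul hp) hI
    fun s hs => mul_le_of_le_one_left (hω s) (rpow_le_one (ha.trans hs.1) (hs.2.trans hb) hp)

def dyadicPoint (t : ℝ) (k : ℕ) : ℝ := max 0 (1 - 2 ^ k * (1 - t))

lemma dyadicPoint_zero {t : ℝ} (ht : 0 ≤ t) : dyadicPoint t 0 = t := by
  simp [dyadicPoint, ht]

lemma dyadicPoint_eq_zero {t : ℝ} {K : ℕ} (hK : 1 ≤ 2 ^ K * (1 - t)) : dyadicPoint t K = 0 :=
  max_eq_left (by linarith)

lemma dyadicPoint_mem_Icc {t : ℝ} (ht0 : 0 ≤ t) (ht1 : t ≤ 1) (k : ℕ) :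
    dyadicPoint t k ∈ Icc 0 t := by
  refine ⟨le_max_left _ _, max_le ht0 ?_⟩
  nlinarith [one_le_pow₀ (one_le_two : (1 : ℝ) ≤ 2) (n := k)]

lemma dyadicPoint_succ_le {t : ℝ} (ht1 : t ≤ 1) (k : ℕ) :
    dyadicPoint t (k + 1) ≤ dyadicPoint t k := by
  refine max_le_max le_rfl ?_
  have : (0 : ℝ) ≤ 2 ^ k * (1 - t) := by have := ht1; positivity
  rw [pow_succ]; linarith

lemma one_sub_dyadicPoint_le (t : ℝ) (k : ℕ) : 1 - dyadicPoint t k ≤ 2 ^ k * (1 - t) := by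
  linarith [show 1 - 2 ^ k * (1 - t) ≤ dyadicPoint t k from le_max_right _ _]

def IsTailDoubling (ω : ℝ → ℝ) (C : ℝ) : Prop :=
  ∀ r : ℝ, 0 ≤ r → r < 1 → (∫ s in r..1, ω s) ≤ C * ∫ s in ((1 + r) / 2)..1, ω s

section Doubling

variable {ω : ℝ → ℝ} {C : ℝ}

lemma tail_le_pow_mul_tail_dyadic (hC : 0 ≤ C) (h : IsTailDoubling ω C) {r : ℝ} (hr0 : 0 ≤ r) (hr1 : r < 1) (n : ℕ) :
    ∫ s in r..1, ω s ≤ C ^ n * ∫ s in (1 - (1 - r) / 2 ^ n)..1, ω s := by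
  induction n with
  | zero => simp
  | succ n ih =>
    have hpos : 0 < (1 - r) / 2 ^ n := by have := hr1; positivity
    have hle : (1 - r) / 2 ^ n ≤ 1 := div_le_one_of_le₀ (by
      linarith [one_le_pow₀ (one_le_two : (1 : ℝ) ≤ 2) (n := n)]) (by positivity)
    have hmid : (1 + (1 - (1 - r) / 2 ^ n)) / 2 = 1 - (1 - r) / 2 ^ (n + 1) := by
      rw [pow_succ]; field_simp; ring
    calc ∫ s in r..1, ω s ≤ C ^ n * ∫ s in (1 - (1 - r) / 2 ^ n)..1, ω s := ih
      _ ≤ C ^ n * (C * ∫ s in (1 - (1 - r) / 2 ^ (n + 1))..1, ω s) := by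
        gcongr
        rw [← hmid]
        exact h _ (by linarith) (by linarith)
      _ = C ^ (n + 1) * ∫ s in (1 - (1 - r) / 2 ^ (n + 1))..1, ω s := by ring

lemma tail_le_pow_mul_tail (hω : ∀ s, 0 ≤ ω s) (hI : IntervalIntegrable ω volume 0 1)
    (hC : 0 ≤ C) (h : IsTailDoubling ω C)
    {r t : ℝ} (hr0 : 0 ≤ r) (hr1 : r < 1) (ht0 : 0 ≤ t) (ht1 : t ≤ 1) {n : ℕ}
    (hrt : 1 - r ≤ 2 ^ n * (1 - t)) :
    ∫ s in r..1, ω s ≤ C ^ n * ∫ s in t..1, ω s := by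
  have htr : t ≤ 1 - (1 - r) / 2 ^ n := by
    rw [le_sub_comm, div_le_iff₀ (by positivity)]; linarith
  refine (tail_le_pow_mul_tail_dyadic hC h hr0 hr1 n).trans ?_
  gcongr
  have hpos : 0 ≤ (1 - r) / 2 ^ n := by have := hr1; positivity
  exact integral_mono_interval htr (by linarith) le_rfl (ae_of_all _ fun s => hω s)
    (hI.mono_Icc ⟨ht0, ht1⟩ ⟨zero_le_one, le_rfl⟩)

lemma integral_dyadicPoint_rpow_mul_le (hω : ∀ s, 0 ≤ ω s) (hI : IntervalIntegrable ω volume 0 1)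
    (hC : 0 ≤ C) (h : IsTailDoubling ω C)
    {t : ℝ} (ht0 : 0 ≤ t) (ht1 : t < 1) (k : ℕ) :
    ∫ s in dyadicPoint t (k + 1)..dyadicPoint t k, s ^ (1 / (1 - t)) * ω s ≤
      exp (-2 ^ k) * C ^ (k + 1) * ∫ s in t..1, ω s := by
  set a := dyadicPoint t (k + 1)
  set b := dyadicPoint t k
  have hp : 0 < 1 / (1 - t) := by have := sub_pos.2 ht1; positivity
  have ha := dyadicPoint_mem_Icc ht0 ht1.le (k + 1)
  have hb := dyadicPoint_mem_Icc ht0 ht1.le k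
  have hab : a ≤ b := dyadicPoint_succ_le ht1.le k
  have hIab : IntervalIntegrable ω volume a b :=
    hI.mono_Icc ⟨ha.1, ha.2.trans ht1.le⟩ ⟨hb.1, hb.2.trans ht1.le⟩
  have hpt : ∀ s ∈ Icc a b, s ^ (1 / (1 - t)) * ω s ≤ exp (-2 ^ k) * ω s := fun s hs => by
    gcongr
    · exact hω s
    · have hx : 2 ^ k * (1 - t) * (1 / (1 - t)) = 2 ^ k := by field_simp [(sub_pos.2 ht1).ne']
      simpa only [hx] using rpow_le_exp_neg_mul_of_le_max (ha.1.trans hs.1) hs.2 hp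
  calc ∫ s in a..b, s ^ (1 / (1 - t)) * ω s
      ≤ ∫ s in a..b, exp (-2 ^ k) * ω s :=
        integral_mono_on hab (hIab.rpow_mul hp.le) (hIab.const_mul _) hpt
    _ = exp (-2 ^ k) * ∫ s in a..b, ω s := integral_const_mul _ _
    _ ≤ exp (-2 ^ k) * ∫ s in a..1, ω s := by
        gcongr
        exact integral_mono_interval le_rfl hab (hb.2.trans ht1.le) (ae_of_all _ fun s => hω s)
          (hI.mono_Icc ⟨ha.1, ha.2.trans ht1.le⟩ ⟨zero_le_one, le_rfl⟩)
    _ ≤ exp (-2 ^ k) * (C ^ (k + 1) * ∫ s in t..1, ω s) := by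
        gcongr
        exact tail_le_pow_mul_tail hω hI hC h ha.1 (ha.2.trans_lt ht1) ht0 ht1.le
          (one_sub_dyadicPoint_le t (k + 1))
    _ = exp (-2 ^ k) * C ^ (k + 1) * ∫ s in t..1, ω s := by ring

lemma integral_rpow_mul_le_mul_tail (hω : ∀ s, 0 ≤ ω s) (hI : IntervalIntegrable ω volume 0 1)
    (hC : 0 ≤ C) (h : IsTailDoubling ω C)
    {t : ℝ} (ht0 : 0 ≤ t) (ht1 : t < 1) :
    ∫ s in 0..t, s ^ (1 / (1 - t)) * ω s ≤
      C * (∑' k : ℕ, exp (-2 ^ k) * C ^ k) * ∫ s in t..1, ω s := by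
  obtain ⟨K, hK⟩ := pow_unbounded_of_one_lt (1 / (1 - t)) one_lt_two
  rw [div_lt_iff₀ (sub_pos.2 ht1)] at hK
  have hW : 0 ≤ ∫ s in t..1, ω s := integral_nonneg ht1.le fun s _ => hω s
  have hpieces : ∀ k < K, IntervalIntegrable (fun s => s ^ (1 / (1 - t)) * ω s) volume
      (dyadicPoint t (k + 1)) (dyadicPoint t k) := fun k _ => by
    have ha := dyadicPoint_mem_Icc ht0 ht1.le (k + 1)
    have hb := dyadicPoint_mem_Icc ht0 ht1.le k
    exact (hI.mono_Icc ⟨ha.1, ha.2.trans ht1.le⟩ ⟨hb.1, hb.2.trans ht1.le⟩).rpow_mul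
      (by have := sub_pos.2 ht1; positivity)
  calc ∫ s in 0..t, s ^ (1 / (1 - t)) * ω s
      = ∑ k ∈ Finset.range K,
          ∫ s in dyadicPoint t (k + 1)..dyadicPoint t k, s ^ (1 / (1 - t)) * ω s := by
        rw [sum_integral_adjacent_intervals_rev hpieces, dyadicPoint_zero ht0,
          dyadicPoint_eq_zero hK.le]
    _ ≤ ∑ k ∈ Finset.range K, exp (-2 ^ k) * C ^ (k + 1) * ∫ s in t..1, ω s :=
        Finset.sum_le_sum fun k _ => integral_dyadicPoint_rpow_mul_le hω hI hC h ht0 ht1 k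
    _ = C * (∑ k ∈ Finset.range K, exp (-2 ^ k) * C ^ k) * ∫ s in t..1, ω s := by
        rw [Finset.mul_sum, Finset.sum_mul]
        exact Finset.sum_congr rfl fun k _ => by ring
    _ ≤ C * (∑' k : ℕ, exp (-2 ^ k) * C ^ k) * ∫ s in t..1, ω s := by
        gcongr
        exact (summable_exp_neg_two_pow_mul_pow C).sum_le_tsum _ fun k _ => by positivity

end Doubling

theorem doubling_to_moment_bound (ω : ℝ → ℝ) (hω : ∀ s, 0 ≤ ω s)
    (hint : IntegrableOn ω (Set.Ico (0:ℝ) 1))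
    (C : ℝ) (hC : 1 < C)
    (h : ∀ r : ℝ, 0 ≤ r → r < 1 →
      (∫ s in r..1, ω s) ≤ C * ∫ s in ((1 + r) / 2)..1, ω s) :
    ∃ C' : ℝ, 0 < C' ∧ ∀ t : ℝ, 3 / 4 < t → t < 1 →
      (∫ s in (0:ℝ)..1, s ^ (1 / (1 - t)) * ω s) ≤ C' * ∫ s in t..1, ω s := by
  have hI : IntervalIntegrable ω volume 0 1 :=
    (intervalIntegrable_iff_integrableOn_Ioc_of_le zero_le_one).2
      (((integrableOn_Icc_iff_integrableOn_Ico enorm_ne_top).2 hint).mono_set Ioc_subset_Icc_self)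
  have hC0 : 0 ≤ C := by linarith
  refine ⟨1 + C * ∑' k : ℕ, exp (-2 ^ k) * C ^ k, by positivity, fun t ht34 ht1 => ?_⟩
  have ht0 : 0 ≤ t := by linarith
  have hIt : IntervalIntegrable ω volume t 1 := hI.mono_Icc ⟨ht0, ht1.le⟩ ⟨zero_le_one, le_rfl⟩
  have hp : 0 ≤ 1 / (1 - t) := by have := sub_pos.2 ht1; positivity
  calc ∫ s in (0:ℝ)..1, s ^ (1 / (1 - t)) * ω s
      = (∫ s in (0:ℝ)..t, s ^ (1 / (1 - t)) * ω s) + ∫ s in t..1, s ^ (1 / (1 - t)) * ω s :=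
        (integral_add_adjacent_intervals
          ((hI.mono_Icc ⟨le_rfl, zero_le_one⟩ ⟨ht0, ht1.le⟩).rpow_mul hp) (hIt.rpow_mul hp)).symm
    _ ≤ C * (∑' k : ℕ, exp (-2 ^ k) * C ^ k) * (∫ s in t..1, ω s) + ∫ s in t..1, ω s :=
        add_le_add (integral_rpow_mul_le_mul_tail hω hI hC0 h ht0 ht1)
          (integral_rpow_mul_le_integral hω hIt ht0 ht1.le le_rfl hp)
    _ = (1 + C * ∑' k : ℕ, exp (-2 ^ k) * C ^ k) * ∫ s in t..1, ω s := by ring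
end

section
/- Let γ > 0 and let ρ : [0,∞) → [0,∞) be right-continuous, nondecreasing, and of upper type γ, meaning ρ(xy) ≤ C x^γ ρ(y) for all x ≥ 1 and y > 0. Define ω_ρ(r) = ρ(1-r) on [0,1) and ω̂_ρ(r) = ∫_r^1 ρ(1-s) ds. Then ω̂_ρ(r) is comparable to (1-r)ρ(1-r) uniformly for r ∈ [0,1). -/
open MeasureTheory

theorem tail_integral_comparable_upper_type (γ Cρ : ℝ) (hγ : 0 < γ) (hCρ : 0 < Cρ)
    (ρ : ℝ → ℝ) (hρ0 : ∀ x, 0 ≤ ρ x) (hmono : Monotone ρ)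
    (hrc : ∀ x : ℝ, ContinuousWithinAt ρ (Set.Ici x) x)
    (hupper : ∀ x y : ℝ, 1 ≤ x → 0 < y → ρ (x * y) ≤ Cρ * x ^ γ * ρ y) :
    ∃ c C : ℝ, 0 < c ∧ 0 < C ∧ ∀ r : ℝ, 0 ≤ r → r < 1 →
      (c * ((1 - r) * ρ (1 - r)) ≤ ∫ s in r..1, ρ (1 - s)) ∧
      (∫ s in r..1, ρ (1 - s)) ≤ C * ((1 - r) * ρ (1 - r)) := by
  have h2γ : (0:ℝ) < (2:ℝ) ^ γ := Real.rpow_pos_of_pos two_pos γ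
  refine ⟨1 / (2 * Cρ * 2 ^ γ), 1, by positivity, one_pos, ?_⟩
  intro r hr0 hr1
  have hA : Antitone (fun s => ρ (1 - s)) := fun a b hab => hmono (by linarith)
  have hI : ∀ a b : ℝ, IntervalIntegrable (fun s => ρ (1 - s)) volume a b :=
    fun a b => hA.intervalIntegrable
  constructor
  · -- lower bound
    set m : ℝ := (r + 1) / 2 with hm
    have hrm : r ≤ m := by rw [hm]; linarith
    have hm1 : m ≤ 1 := by rw [hm]; linarith
    have hmlt : m < 1 := by rw [hm]; linarith
    have h1m : 1 - m = (1 - r) / 2 := by rw [hm]; ring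
    have hconst : ((1 - r) / 2) * ρ (1 - m) ≤ ∫ s in r..m, ρ (1 - s) := by
      have := intervalIntegral.integral_mono_on hrm
        (intervalIntegrable_const (c := ρ (1 - m))) (hI r m)
        (fun x hx => hmono (by have := hx.2; linarith))
      rw [intervalIntegral.integral_const] at this
      have : (m - r) * ρ (1 - m) ≤ ∫ s in r..m, ρ (1 - s) := by simpa using this
      have hmr : m - r = (1 - r) / 2 := by rw [hm]; ring
      linarith [this, hmr ▸ this]
    have htype : ρ (1 - r) ≤ Cρ * 2 ^ γ * ρ (1 - m) := by
      have h2 : (2:ℝ) * (1 - m) = 1 - r := by rw [h1m]; ring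
      have := hupper 2 (1 - m) one_le_two (by linarith)
      rwa [h2] at this
    have hsplit : (∫ s in r..m, ρ (1 - s)) ≤ ∫ s in r..1, ρ (1 - s) := by
      have hadd := intervalIntegral.integral_add_adjacent_intervals (hI r m) (hI m 1)
      have hnn : (0:ℝ) ≤ ∫ s in m..1, ρ (1 - s) :=
        intervalIntegral.integral_nonneg hm1 (fun x _ => hρ0 _)
      linarith [hadd, hnn]
    have hK : (0:ℝ) < 2 * Cρ * 2 ^ γ := by positivity
    have key : 1 / (2 * Cρ * 2 ^ γ) * ((1 - r) * ρ (1 - r)) ≤ ((1 - r) / 2) * ρ (1 - m) := by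
      rw [div_mul_eq_mul_div, one_mul, div_le_iff₀ hK]
      have h1r : (0:ℝ) ≤ 1 - r := by linarith
      nlinarith [mul_le_mul_of_nonneg_left htype h1r, hρ0 (1 - m)]
    linarith
  · -- upper bound
    have : (∫ s in r..1, ρ (1 - s)) ≤ ∫ s in r..1, ρ (1 - r) := by
      apply intervalIntegral.integral_mono_on (le_of_lt hr1) (hI r 1)
        (intervalIntegrable_const (c := ρ (1 - r)))
      exact fun x hx => hmono (by have := hx.1; linarith)
    rw [intervalIntegral.integral_const, smul_eq_mul] at this
    rw [one_mul]
    linarith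
end

section
/- Let γ > 0, let ρ : [0,∞) → [0,∞) be nondecreasing and of upper type γ, and set ω̂(r) = ∫_r^1 ρ(1-s) ds. Then r ↦ ω̂(r)/(1-r)^{γ+1} is essentially increasing on [0,1) and r ↦ ω̂(r)/(1-r) is essentially decreasing on [0,1); i.e., there are constants such that ω̂(r)/(1-r)^{γ+1} ≤ C ω̂(t)/(1-t)^{γ+1} and ω̂(t)/(1-t) ≤ C ω̂(r)/(1-r) for all 0 ≤ r ≤ t < 1. -/
open MeasureTheory

/-!
Substituting `u = 1 - s` turns `ω̂(r)` into `F(1 - r)` with `F(a) = ∫₀^a ρ`. Since `ρ` is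
nondecreasing, `F(a)/a` is an average of `ρ` over `[0, a]` and hence nondecreasing in `a`. The
rescaling `u = (a/b) v` together with the upper type bound `ρ((a/b) v) ≤ Cρ (a/b)^γ ρ(v)` gives
`F(a) ≤ Cρ (a/b)^(γ+1) F(b)` for `b ≤ a`.
-/

theorem Monotone.integral_zero_div_le {ρ : ℝ → ℝ} (hρ : Monotone ρ) {a b : ℝ} (hb : 0 < b)
    (hba : b ≤ a) : (∫ u in (0 : ℝ)..b, ρ u) / b ≤ (∫ u in (0 : ℝ)..a, ρ u) / a := by
  have hint : ∀ u v : ℝ, IntervalIntegrable ρ volume u v := fun _ _ ↦ hρ.intervalIntegrable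
  have hinit : (∫ u in (0 : ℝ)..b, ρ u) ≤ b * ρ b := by
    simpa using intervalIntegral.integral_mono_on hb.le (hint 0 b) intervalIntegrable_const
      fun u hu ↦ hρ hu.2
  have htail : (a - b) * ρ b ≤ ∫ u in b..a, ρ u := by
    simpa using intervalIntegral.integral_mono_on hba intervalIntegrable_const (hint b a)
      fun u hu ↦ hρ hu.1
  rw [← intervalIntegral.integral_add_adjacent_intervals (hint 0 b) (hint b a),
    div_le_div_iff₀ hb (hb.trans_le hba)]
  nlinarith

theorem integral_zero_div_rpow_le_of_upper_type {ρ : ℝ → ℝ} {γ Cρ : ℝ} (hρ : Monotone ρ)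
    (hupper : ∀ x y : ℝ, 1 ≤ x → 0 < y → ρ (x * y) ≤ Cρ * x ^ γ * ρ y) {a b : ℝ} (hb : 0 < b)
    (hba : b ≤ a) :
    (∫ u in (0 : ℝ)..a, ρ u) / a ^ (γ + 1) ≤ Cρ * ((∫ u in (0 : ℝ)..b, ρ u) / b ^ (γ + 1)) := by
  set c := a / b
  have hc : 1 ≤ c := (one_le_div hb).mpr hba
  have hc0 : 0 < c := one_pos.trans_le hc
  have hbc : b * c = a := mul_div_cancel₀ a hb.ne'
  have ha : 0 < a := hb.trans_le hba
  have hrescale : (∫ u in (0 : ℝ)..a, ρ u) = c * ∫ v in (0 : ℝ)..b, ρ (v * c) := by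
    rw [intervalIntegral.integral_comp_mul_right ρ hc0.ne', zero_mul, hbc, smul_eq_mul,
      mul_inv_cancel_left₀ hc0.ne']
  have hpointwise : (∫ v in (0 : ℝ)..b, ρ (v * c)) ≤ ∫ v in (0 : ℝ)..b, Cρ * c ^ γ * ρ v := by
    refine intervalIntegral.integral_mono_on_of_le_Ioo hb.le ?_ ?_ fun v hv ↦ ?_
    · exact (hρ.comp fun x y hxy ↦ mul_le_mul_of_nonneg_right hxy hc0.le).intervalIntegrable
    · exact hρ.intervalIntegrable.const_mul _
    · rw [mul_comm v]; exact hupper c v hc hv.1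
  have hbound : (∫ u in (0 : ℝ)..a, ρ u) ≤ Cρ * c ^ (γ + 1) * ∫ u in (0 : ℝ)..b, ρ u := by
    rw [intervalIntegral.integral_const_mul] at hpointwise
    calc (∫ u in (0 : ℝ)..a, ρ u) = c * ∫ v in (0 : ℝ)..b, ρ (v * c) := hrescale
      _ ≤ c * (Cρ * c ^ γ * ∫ u in (0 : ℝ)..b, ρ u) := by gcongr
      _ = Cρ * c ^ (γ + 1) * ∫ u in (0 : ℝ)..b, ρ u := by
        rw [Real.rpow_add_one hc0.ne']; ring
  calc (∫ u in (0 : ℝ)..a, ρ u) / a ^ (γ + 1)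
      ≤ Cρ * c ^ (γ + 1) * (∫ u in (0 : ℝ)..b, ρ u) / a ^ (γ + 1) := by gcongr
    _ = Cρ * ((∫ u in (0 : ℝ)..b, ρ u) / b ^ (γ + 1)) := by
      rw [Real.div_rpow ha.le hb.le]; field_simp

theorem tail_integral_essential_monotonicity_general (γ Cρ : ℝ)
    (ρ : ℝ → ℝ) (hρ0 : ∀ x, 0 ≤ ρ x) (hmono : Monotone ρ)
    (hupper : ∀ x y : ℝ, 1 ≤ x → 0 < y → ρ (x * y) ≤ Cρ * x ^ γ * ρ y) :
    ∃ C : ℝ, 0 < C ∧ ∀ r t : ℝ, 0 ≤ r → r ≤ t → t < 1 →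
      ((∫ s in r..1, ρ (1 - s)) / (1 - r) ^ (γ + 1) ≤
        C * ((∫ s in t..1, ρ (1 - s)) / (1 - t) ^ (γ + 1))) ∧
      ((∫ s in t..1, ρ (1 - s)) / (1 - t) ≤
        C * ((∫ s in r..1, ρ (1 - s)) / (1 - r))) := by
  have htail (r : ℝ) : ∫ s in r..1, ρ (1 - s) = ∫ u in (0 : ℝ)..1 - r, ρ u := by
    simp [intervalIntegral.integral_comp_sub_left]
  refine ⟨max Cρ 1, by positivity, fun r t _ hrt ht ↦ ?_⟩
  have hb : 0 < 1 - t := by linarith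
  have hba : 1 - t ≤ 1 - r := by linarith
  have hF (a : ℝ) (ha : 0 ≤ a) : 0 ≤ ∫ u in (0 : ℝ)..a, ρ u :=
    intervalIntegral.integral_nonneg ha fun u _ ↦ hρ0 u
  rw [htail r, htail t]
  constructor
  · refine (integral_zero_div_rpow_le_of_upper_type hmono hupper hb hba).trans ?_
    gcongr
    · exact div_nonneg (hF _ hb.le) (by positivity)
    · exact le_max_left _ _
  · refine (hmono.integral_zero_div_le hb hba).trans (le_mul_of_one_le_left ?_ (le_max_right _ _))
    exact div_nonneg (hF _ (hb.le.trans hba)) (hb.trans_le hba).le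

theorem tail_integral_essential_monotonicity (γ Cρ : ℝ) (hγ : 0 < γ) (hCρ : 0 < Cρ)
    (ρ : ℝ → ℝ) (hρ0 : ∀ x, 0 ≤ ρ x) (hmono : Monotone ρ)
    (hupper : ∀ x y : ℝ, 1 ≤ x → 0 < y → ρ (x * y) ≤ Cρ * x ^ γ * ρ y) :
    ∃ C : ℝ, 0 < C ∧ ∀ r t : ℝ, 0 ≤ r → r ≤ t → t < 1 →
      ((∫ s in r..1, ρ (1 - s)) / (1 - r) ^ (γ + 1) ≤
        C * ((∫ s in t..1, ρ (1 - s)) / (1 - t) ^ (γ + 1))) ∧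
      ((∫ s in t..1, ρ (1 - s)) / (1 - t) ≤
        C * ((∫ s in r..1, ρ (1 - s)) / (1 - r))) :=
  tail_integral_essential_monotonicity_general γ Cρ ρ hρ0 hmono hupper
end
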